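/- For every ordinal α with 0 < α < ε₀, the Ackermann function A_α is strictly monotone in its argument: for all x, y ∈ ℕ, if y > x then A_α(y) > A_α(x). -/

import Mathlib

/-!
Write `o ⟶ₙ p` when `p` is the predecessor of `o` or the `n`-th term of its fundamental sequence.
The standard fundamental sequences have the Bachmann property `λ(k+1) ⟶ₙ* λ(k)` for all `n, k`.
Along a descent `o ⟶ₙ* p` we have `A_p(n) ≤ A_o(n)`, provided the functions met on the way are
monotone and exceed the identity on positive arguments (at a predecessor step this is
`A_p(n) ≤ A_p^n(1)`). Hence strict monotonicity and `x < A_α(x)` can be proved together by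
induction on `α`; at a limit `λ`, for `0 < x < y`,
`A_λ(x) = A_{λ(x)}(x) < A_{λ(x)}(y) ≤ A_{λ(y)}(y) = A_λ(y)`.
-/

open ONote Ordinal

/-- The Ackermann hierarchy `A_α` (meaningful for `0 < α`): `A_1(x) = 2x`,
`A_{α+1}(x) = A_α^[x](1)`, `A_λ(x) = A_{λ(x)}(x)`. -/
def Ack : ONote → ℕ → ℕ
  | o =>
    match fundamentalSequence o, fundamentalSequence_has_prop o with
    | Sum.inl none, _ => fun _ => 0
    | Sum.inl (some a), hp =>
      have : a < o := by rw [lt_def, hp.1]; exact Order.lt_succ _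
      if a = 0 then fun x => 2 * x else fun x => (Ack a)^[x] 1
    | Sum.inr f, hp => fun i =>
      have : f i < o := (hp.2.1 i).2.1
      Ack (f i) i
  termination_by o => o

open Relation

theorem ack_def {o : ONote} {x} (e : fundamentalSequence o = x) :
    Ack o =
      match
        (motive := (x : Option ONote ⊕ (ℕ → ONote)) → FundamentalSequenceProp o x → ℕ → ℕ)
        x, e ▸ fundamentalSequence_has_prop o with
      | Sum.inl none, _ => fun _ => 0
      | Sum.inl (some a), _ =>
        if a = 0 then fun x => 2 * x else fun x => (Ack a)^[x] 1
      | Sum.inr f, _ => fun i => Ack (f i) i := by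
  subst x
  rw [Ack]

theorem ack_zero_apply (x : ℕ) : Ack 0 x = 0 := by
  rw [ack_def rfl]
  rfl

theorem ack_of_fundamentalSequence_some {o a : ONote}
    (h : fundamentalSequence o = Sum.inl (some a)) :
    Ack o = if a = 0 then fun x => 2 * x else fun x => (Ack a)^[x] 1 := by
  rw [ack_def h]

theorem ack_of_fundamentalSequence_inr {o : ONote} {f : ℕ → ONote}
    (h : fundamentalSequence o = Sum.inr f) (x : ℕ) : Ack o x = Ack (f x) x := by
  rw [ack_def h]

theorem eq_zero_of_fundamentalSequence_none {o : ONote}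
    (h : fundamentalSequence o = Sum.inl none) : o = 0 :=
  (fundamentalSequenceProp_inl_none o).1 (h ▸ fundamentalSequence_has_prop o)

/-- `FSStep n o p` is the step `o ⟶ₙ p`. -/
inductive FSStep (n : ℕ) : ONote → ONote → Prop
  | pred {o a : ONote} : fundamentalSequence o = Sum.inl (some a) → FSStep n o a
  | limit {o : ONote} {f : ℕ → ONote} : fundamentalSequence o = Sum.inr f → FSStep n o (f n)

abbrev FSReach (n : ℕ) : ONote → ONote → Prop := ReflTransGen (FSStep n)

theorem FSStep.lt {n : ℕ} {o p : ONote} (h : FSStep n o p) : p < o := by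
  cases h with
  | pred e =>
    have hp := fundamentalSequence_has_prop o
    rw [e, fundamentalSequenceProp_inl_some] at hp
    rw [lt_def, hp.1]
    exact Order.lt_succ _
  | limit e =>
    have hp := fundamentalSequence_has_prop o
    rw [e, fundamentalSequenceProp_inr] at hp
    exact (hp.2.1 _).2.1

theorem fsReach_zero (n : ℕ) (o : ONote) : FSReach n o 0 := by
  rcases e : fundamentalSequence o with (_ | a) | f
  · rw [eq_zero_of_fundamentalSequence_none e]
  · have h : FSStep n o a := .pred e
    have : a < o := h.lt
    exact .head h (fsReach_zero n a)
  · have h : FSStep n o (f n) := .limit e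
    have : f n < o := h.lt
    exact .head h (fsReach_zero n (f n))
termination_by o

theorem FSStep.oadd_tail {n : ℕ} {b b' : ONote} (h : FSStep n b b') (a : ONote) (m : ℕ+) :
    FSStep n (oadd a m b) (oadd a m b') := by
  cases h with
  | pred e => exact .pred (by simp only [fundamentalSequence, e])
  | limit e => exact .limit (f := fun i => oadd a m _) (by simp only [fundamentalSequence, e])

theorem FSReach.oadd_tail {n : ℕ} {b b' : ONote} (h : FSReach n b b') (a : ONote) (m : ℕ+) :
    FSReach n (oadd a m b) (oadd a m b') :=
  h.lift _ fun _ _ h => h.oadd_tail a m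

theorem fsReach_oadd_succPNat_succ (n : ℕ) (a : ONote) (j : ℕ) :
    FSReach n (oadd a (j + 1).succPNat 0) (oadd a j.succPNat 0) := by
  have hm : (j + 1).succPNat.natPred = j + 1 := Nat.natPred_succPNat _
  rcases e : fundamentalSequence a with (_ | a') | g
  · obtain rfl := eq_zero_of_fundamentalSequence_none e
    exact .single (.pred (by simp only [fundamentalSequence, hm]; rfl))
  · refine .head (.limit (f := fun i => oadd a j.succPNat (oadd a' i.succPNat 0))
      (by simp only [fundamentalSequence, e, hm]; rfl)) ?_
    exact (fsReach_zero n _).oadd_tail a j.succPNat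
  · refine .head (.limit (f := fun i => oadd a j.succPNat (oadd (g i) 1 0))
      (by simp only [fundamentalSequence, e, hm]; rfl)) ?_
    exact (fsReach_zero n _).oadd_tail a j.succPNat

theorem fsReach_oadd_succPNat_of_le (n : ℕ) (a : ONote) {i j : ℕ} (h : j ≤ i) :
    FSReach n (oadd a i.succPNat 0) (oadd a j.succPNat 0) :=
  Nat.rel_of_forall_rel_succ_of_le (Function.swap (FSReach n))
    (f := fun k => oadd a k.succPNat 0) (fsReach_oadd_succPNat_succ n a) h

theorem FSStep.omega0_opow {n : ℕ} {e e' : ONote} (h : FSStep n e e') :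
    FSReach n (oadd e 1 0) (oadd e' 1 0) := by
  cases h with
  | pred he =>
    refine .head (.limit (f := fun i => oadd e' i.succPNat 0)
      (by simp only [fundamentalSequence, he]; rfl)) ?_
    exact fsReach_oadd_succPNat_of_le n e' (Nat.zero_le n)
  | limit he =>
    exact .single (.limit (f := fun i => oadd _ 1 0) (by simp only [fundamentalSequence, he]; rfl))

theorem FSReach.omega0_opow {n : ℕ} {e e' : ONote} (h : FSReach n e e') :
    FSReach n (oadd e 1 0) (oadd e' 1 0) := by
  induction h with
  | refl => exact .refl
  | tail _ h ih => exact ih.trans h.omega0_opow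

theorem fsReach_fundamentalSequence_succ {o : ONote} {f : ℕ → ONote}
    (e : fundamentalSequence o = Sum.inr f) (n k : ℕ) : FSReach n (f (k + 1)) (f k) := by
  induction o generalizing f with
  | zero => cases e
  | oadd a m b iha ihb =>
    rcases eb : fundamentalSequence b with (_ | b') | g
    · obtain rfl := eq_zero_of_fundamentalSequence_none eb
      rcases ea : fundamentalSequence a with (_ | a') | g <;> rcases em : m.natPred with _ | m' <;>
        simp only [fundamentalSequence, ea, em, reduceCtorEq, Sum.inr.injEq] at e <;> subst e
      · exact fsReach_oadd_succPNat_succ n a' k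
      · exact (fsReach_oadd_succPNat_succ n a' k).oadd_tail a m'.succPNat
      · exact (iha ea).omega0_opow
      · exact (iha ea).omega0_opow.oadd_tail a m'.succPNat
    · simp only [fundamentalSequence, eb, reduceCtorEq] at e
    · simp only [fundamentalSequence, eb, Sum.inr.injEq] at e
      subst e
      exact (ihb eb).oadd_tail a m

theorem fsReach_fundamentalSequence_of_le {o : ONote} {f : ℕ → ONote}
    (e : fundamentalSequence o = Sum.inr f) (n : ℕ) {j k : ℕ} (h : j ≤ k) :
    FSReach n (f k) (f j) :=
  Nat.rel_of_forall_rel_succ_of_le (Function.swap (FSReach n))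
    (fsReach_fundamentalSequence_succ e n) h

theorem lt_iterate_one {g : ℕ → ℕ} (hg : ∀ x, 0 < x → x < g x) (k : ℕ) : k < g^[k] 1 := by
  induction k with
  | zero => simp
  | succ k ih =>
    rw [Function.iterate_succ_apply']
    exact Nat.lt_of_le_of_lt ih (hg _ (Nat.zero_lt_of_lt ih))

theorem strictMono_iterate_one {g : ℕ → ℕ} (hg : ∀ x, 0 < x → x < g x) :
    StrictMono fun k => g^[k] 1 :=
  strictMono_nat_of_lt_succ fun k => by
    rw [Function.iterate_succ_apply']
    exact hg _ (Nat.zero_lt_of_lt (lt_iterate_one hg k))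

theorem le_iterate_one {g : ℕ → ℕ} (hmono : Monotone g) (hg : ∀ x, 0 < x → x < g x)
    (h0 : g 0 ≤ 1) : ∀ n, g n ≤ g^[n] 1
  | 0 => h0
  | k + 1 => by
    rw [Function.iterate_succ_apply']
    exact hmono (lt_iterate_one hg k)

theorem ack_zero_le_one (o : ONote) : Ack o 0 ≤ 1 := by
  rcases e : fundamentalSequence o with (_ | a) | f
  · rw [eq_zero_of_fundamentalSequence_none e, ack_zero_apply]
    exact zero_le_one
  · rw [ack_of_fundamentalSequence_some e]
    split <;> simp
  · rw [ack_of_fundamentalSequence_inr e]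
    have : f 0 < o := (FSStep.limit (n := 0) e).lt
    exact ack_zero_le_one (f 0)
termination_by o

theorem ack_le_ack_of_fsStep {n : ℕ} {o p : ONote} (h : FSStep n o p)
    (hp : p ≠ 0 → StrictMono (Ack p) ∧ ∀ x, 0 < x → x < Ack p x) : Ack p n ≤ Ack o n := by
  cases h with
  | pred e =>
    rw [ack_of_fundamentalSequence_some e]
    split_ifs with hp0
    · rw [hp0, ack_zero_apply]
      exact Nat.zero_le _
    · obtain ⟨hmono, hlt⟩ := hp hp0
      exact le_iterate_one hmono.monotone hlt (ack_zero_le_one p) n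
  | limit e => rw [ack_of_fundamentalSequence_inr e]

theorem ack_le_ack_of_fsReach {n : ℕ} {o p : ONote} (h : FSReach n o p)
    (H : ∀ q < o, q ≠ 0 → StrictMono (Ack q) ∧ ∀ x, 0 < x → x < Ack q x) :
    Ack p n ≤ Ack o n := by
  induction h using ReflTransGen.head_induction_on with
  | refl => exact le_rfl
  | head hstep _ ih =>
    exact (ih fun q hq => H q (hq.trans hstep.lt)).trans
      (ack_le_ack_of_fsStep hstep (H _ hstep.lt))

theorem strictMono_ack_and_lt_ack (α : ONote) (hα : α ≠ 0) :
    StrictMono (Ack α) ∧ ∀ x, 0 < x → x < Ack α x := by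
  have IH : ∀ β < α, β ≠ 0 → StrictMono (Ack β) ∧ ∀ x, 0 < x → x < Ack β x :=
    fun β _ hβ => strictMono_ack_and_lt_ack β hβ
  rcases e : fundamentalSequence α with (_ | a) | f
  · exact absurd (eq_zero_of_fundamentalSequence_none e) hα
  · rw [ack_of_fundamentalSequence_some e]
    split_ifs with ha0
    · exact ⟨fun x y hxy => show 2 * x < 2 * y by omega, fun x hx => show x < 2 * x by omega⟩
    · have hlt := (IH a (FSStep.pred (n := 0) e).lt ha0).2
      exact ⟨strictMono_iterate_one hlt, fun x _ => lt_iterate_one hlt x⟩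
  · have hp := fundamentalSequence_has_prop α
    rw [e, fundamentalSequenceProp_inr] at hp
    have hf_lt (i : ℕ) : f i < α := (hp.2.1 i).2.1
    have hf_ne (i : ℕ) (hi : 0 < i) : f i ≠ 0 := by
      intro h0
      have h := strictMono_nat_of_lt_succ (fun i => (hp.2.1 i).1) hi
      rw [h0, lt_def, repr_zero] at h
      exact not_lt_zero h
    have hlt (x : ℕ) (hx : 0 < x) : x < Ack (f x) x := (IH _ (hf_lt x) (hf_ne x hx)).2 x hx
    refine ⟨fun x y hxy => ?_, fun x hx => by rw [ack_of_fundamentalSequence_inr e]; exact hlt x hx⟩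
    rw [ack_of_fundamentalSequence_inr e, ack_of_fundamentalSequence_inr e]
    rcases Nat.eq_zero_or_pos x with rfl | hx
    · calc Ack (f 0) 0 ≤ 1 := ack_zero_le_one _
        _ < Ack (f y) y := Nat.lt_of_le_of_lt hxy (hlt y hxy)
    · calc Ack (f x) x < Ack (f x) y := (IH _ (hf_lt x) (hf_ne x hx)).1 hxy
        _ ≤ Ack (f y) y := ack_le_ack_of_fsReach (fsReach_fundamentalSequence_of_le e y hxy.le)
            fun q hq => IH q (hq.trans (hf_lt y))
termination_by α

theorem ack_strictMono_general (α : ONote) (hα : 0 < α) (x y : ℕ) (hxy : x < y) :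
    Ack α x < Ack α y :=
  (strictMono_ack_and_lt_ack α (ne_of_gt hα)).1 hxy

/-- For every ordinal `0 < α < ε₀`, the Ackermann function `A_α` is strictly monotone in its
argument: if `y > x` then `A_α(y) > A_α(x)`. -/
theorem ack_strictMono (α : ONote) (hNF : α.NF) (hα : 0 < α) (x y : ℕ) (hxy : x < y) :
    Ack α x < Ack α y :=
  ack_strictMono_general α hα x y hxy
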